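/- Let ρ be a prime congruence on a commutative semiring A. Then √ρ = ρ₊. Consequently, if moreover ρ = ρ₊, then ρ is a radical congruence. -/

import Mathlib

/-- The twisted product on `A × A`. -/
def tmul {A : Type*} [CommSemiring A] (p q : A × A) : A × A :=
  (p.1 * q.1 + p.2 * q.2, p.1 * q.2 + p.2 * q.1)

/-- Twisted powers, with `(a,b)^{∗0} = (1,0)`. -/
def tpow {A : Type*} [CommSemiring A] (p : A × A) : ℕ → A × A
  | 0 => (1, 0)
  | n + 1 => tmul (tpow p n) p

/-- `ρ` is a congruence on the commutative semiring `A`. -/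
def IsCong {A : Type*} [CommSemiring A] (ρ : Set (A × A)) : Prop :=
  (∀ a : A, (a, a) ∈ ρ) ∧
  (∀ a b : A, (a, b) ∈ ρ → (b, a) ∈ ρ) ∧
  (∀ a b c : A, (a, b) ∈ ρ → (b, c) ∈ ρ → (a, c) ∈ ρ) ∧
  (∀ a b c d : A, (a, b) ∈ ρ → (c, d) ∈ ρ → (a + c, b + d) ∈ ρ) ∧
  (∀ a b c d : A, (a, b) ∈ ρ → (c, d) ∈ ρ → (a * c, b * d) ∈ ρ)

/-- `ρ₊ = {(a,b) : (a+c, b+c) ∈ ρ for some c}`. -/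
def plusPart {A : Type*} [CommSemiring A] (ρ : Set (A × A)) : Set (A × A) :=
  {p | ∃ c : A, (p.1 + c, p.2 + c) ∈ ρ}

/-- `√ρ = {(a,b) : (a+c, b+c)^{∗n} ∈ ρ for some c and some positive n}`. -/
def rad {A : Type*} [CommSemiring A] (ρ : Set (A × A)) : Set (A × A) :=
  {p | ∃ c : A, ∃ n : ℕ, 0 < n ∧ tpow (p.1 + c, p.2 + c) n ∈ ρ}

/-! Since `tpow p (n + 1) = tmul (tpow p n) p`, primality peels off one factor at a time, so a
positive twisted power lies in `ρ` only if the base does; hence the power in the definition of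
`√ρ` may be taken to be `1`, which is exactly the definition of `ρ₊`. -/

section

variable {A : Type*} [CommSemiring A] {ρ : Set (A × A)}

theorem tpow_one (p : A × A) : tpow p 1 = p := by
  simp [tpow, tmul]

theorem mem_of_tpow_mem (hprime : ∀ p q : A × A, tmul p q ∈ ρ → p ∈ ρ ∨ q ∈ ρ)
    {p : A × A} : ∀ {n : ℕ}, 0 < n → tpow p n ∈ ρ → p ∈ ρ
  | 1, _, h => by rwa [tpow_one] at h
  | n + 2, _, h => (hprime _ _ h).elim (mem_of_tpow_mem hprime n.succ_pos) id

theorem plusPart_subset_rad : plusPart ρ ⊆ rad ρ :=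
  fun _ ⟨c, h⟩ => ⟨c, 1, one_pos, by rwa [tpow_one]⟩

theorem rad_eq_plusPart (hprime : ∀ p q : A × A, tmul p q ∈ ρ → p ∈ ρ ∨ q ∈ ρ) :
    rad ρ = plusPart ρ :=
  plusPart_subset_rad.antisymm' fun _ ⟨c, _, hn, h⟩ => ⟨c, mem_of_tpow_mem hprime hn h⟩

end

theorem rad_of_prime_general {A : Type*} [CommSemiring A] (ρ : Set (A × A))
    (hprime : ∀ p q : A × A, tmul p q ∈ ρ → p ∈ ρ ∨ q ∈ ρ) :
    rad ρ = plusPart ρ ∧ (ρ = plusPart ρ → rad ρ = ρ) :=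
  ⟨rad_eq_plusPart hprime, fun h => (rad_eq_plusPart hprime).trans h.symm⟩

/-- If `ρ` is a prime congruence on a commutative semiring `A`, then `√ρ = ρ₊`.
Consequently, if moreover `ρ = ρ₊`, then `ρ` is a radical congruence. -/
theorem rad_of_prime {A : Type*} [CommSemiring A] (ρ : Set (A × A))
    (hρ : IsCong ρ) (hproper : ρ ≠ Set.univ)
    (hprime : ∀ p q : A × A, tmul p q ∈ ρ → p ∈ ρ ∨ q ∈ ρ) :
    rad ρ = plusPart ρ ∧ (ρ = plusPart ρ → rad ρ = ρ) :=
  rad_of_prime_general ρ hprime
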